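/- arXiv:2309.10104 — 5 statements merged into one kernel-verified Lean document; each statement's English description precedes it below -/
import Mathlib

section
/- Let (E,w,d) be an ultra triple, r a non-negative integer, C = (c_1,…,c_k) an ordered finite subset of E, and A an n-subset of E with n > k. Let (v_1,…,v_k) = proj(C → A) be a sequential projection. Then for every v ∈ A \ {v_1,…,v_k}, we have dist_r({v_1,…,v_k}, v) ≤ dist_r({c_1,…,c_k}, v). -/
open Finset

noncomputable def distR {E : Type*} [DecidableEq E] (d : E → E → ℝ) (r : ℕ)
    (C : Finset E) (v : E) : ℝ :=
  if C.card ≤ r then 0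
  else sSup {s : ℝ | ∃ A ⊆ C, A.card = C.card - r ∧ s = ∑ x ∈ A, d v x}

noncomputable def perList {E : Type*} [DecidableEq E] (w : E → ℝ) (d : E → E → ℝ)
    (r : ℕ) : List E → ℝ
  | [] => 0
  | a :: l => perList w d r l + w a + distR d r l.toFinset a

noncomputable def perR {E : Type*} [DecidableEq E] (w : E → ℝ) (d : E → E → ℝ)
    (r : ℕ) (A : Finset E) : ℝ := perList w d r A.toList

/-- `b` is a projection of `c` onto the finite set `A`. -/
def IsProj {E : Type*} [DecidableEq E] (d : E → E → ℝ) (A : Finset E) (c b : E) : Prop :=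
  (c ∈ A ∧ b = c) ∨ (c ∉ A ∧ b ∈ A ∧ ∀ x ∈ A, d c b ≤ d c x)

/-- `v` is a sequential projection of the ordered set `c` (of length `k`) onto `A`. -/
def IsSeqProj {E : Type*} [DecidableEq E] (d : E → E → ℝ) (A : Finset E)
    (k : ℕ) (c v : ℕ → E) : Prop :=
  ∀ i < k, IsProj d (A \ (Finset.range i).image v) (c i) (v i)

/-- `c` is a greedy `r`-removed `m`-permutation of `C`. -/
def IsGreedy {E : Type*} [DecidableEq E] (w : E → ℝ) (d : E → E → ℝ) (r : ℕ)
    (C : Finset E) (m : ℕ) (c : ℕ → E) : Prop :=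
  (∀ i < m, c i ∈ C) ∧ (∀ i < m, ∀ j < m, c i = c j → i = j) ∧
  ∀ i < m, ∀ x ∈ C, x ∉ (Finset.range i).image c →
    perR w d r (insert x ((Finset.range i).image c)) ≤
      perR w d r (insert (c i) ((Finset.range i).image c))

noncomputable def distF {E : Type*} [DecidableEq E] (d : E → E → ℝ)
    (f : ℕ → ℝ → ℝ) (C : Finset E) (x : E) : ℝ :=
  let l := (C.toList.map (fun c => d x c)).insertionSort (· ≤ ·)
  ∑ i ∈ Finset.range l.length, f (i + 1) (l.getD i 0)

/-! Each projection `v i` is at least as close to `u` as `c i` is (ultrametric inequality plus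
minimality of the projection), and `dist_r` is monotone under such a pointwise comparison of
two injectively indexed sets of the same size. -/

section distR

variable {E : Type*} [DecidableEq E] (d : E → E → ℝ) (r : ℕ)

lemma sum_le_distR {C B : Finset E} (v : E) (hB : B ⊆ C) (hcard : B.card = C.card - r) :
    ∑ x ∈ B, d v x ≤ distR d r C v := by
  unfold distR
  split_ifs with hr
  -- if `C.card ≤ r` the only admissible `B` is `∅`, in line with the value `0` of `distR`
  · rw [card_eq_zero.mp (show B.card = 0 by omega), sum_empty]
  · have hfin : {s : ℝ | ∃ A ⊆ C, A.card = C.card - r ∧ s = ∑ x ∈ A, d v x}.Finite := by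
      refine (Set.finite_range fun A : C.powerset => ∑ x ∈ (A : Finset E), d v x).subset ?_
      rintro s ⟨A, hA, -, rfl⟩
      exact ⟨⟨A, mem_powerset.mpr hA⟩, rfl⟩
    exact le_csSup hfin.bddAbove ⟨B, hB, hcard, rfl⟩

lemma distR_le_of_forall_sum_le {C : Finset E} {v : E} {b : ℝ}
    (h : ∀ B ⊆ C, B.card = C.card - r → ∑ x ∈ B, d v x ≤ b) : distR d r C v ≤ b := by
  unfold distR
  split_ifs with hr
  · simpa using h ∅ (empty_subset C) (by rw [card_empty]; omega)
  · obtain ⟨B₀, hB₀, hB₀card⟩ := exists_subset_card_eq (s := C) (Nat.sub_le C.card r)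
    refine csSup_le ⟨_, B₀, hB₀, hB₀card, rfl⟩ ?_
    rintro s ⟨B, hB, hcard, rfl⟩
    exact h B hB hcard

lemma distR_image_le_image {ι : Type*} {s : Finset ι} {f g : ι → E} {u : E}
    (hf : Set.InjOn f s) (hg : Set.InjOn g s) (hfg : ∀ i ∈ s, d u (f i) ≤ d u (g i)) :
    distR d r (s.image f) u ≤ distR d r (s.image g) u := by
  refine distR_le_of_forall_sum_le d r fun B hB hcard => ?_
  obtain ⟨t, hts, rfl⟩ := subset_image_iff.mp hB
  have htf : Set.InjOn f t := hf.mono hts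
  have htg : Set.InjOn g t := hg.mono hts
  calc ∑ x ∈ t.image f, d u x
      = ∑ i ∈ t, d u (f i) := sum_image htf
    _ ≤ ∑ i ∈ t, d u (g i) := sum_le_sum fun i hi => hfg i (hts hi)
    _ = ∑ x ∈ t.image g, d u x := (sum_image htg).symm
    _ ≤ distR d r (s.image g) u := by
      refine sum_le_distR d r u (image_subset_image hts) ?_
      rw [card_image_of_injOn htf, card_image_of_injOn hf] at hcard
      rwa [card_image_of_injOn htg, card_image_of_injOn hg]

end distR

section projection

variable {E : Type*} [DecidableEq E] {d : E → E → ℝ}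

lemma IsProj.dist_le (hsymm : ∀ a b : E, a ≠ b → d a b = d b a)
    (hultra : ∀ a b c : E, a ≠ b → a ≠ c → b ≠ c → d a b ≤ max (d a c) (d b c))
    {S : Finset E} {c b u : E} (hproj : IsProj d S c b) (huS : u ∈ S) (hub : u ≠ b) :
    d u b ≤ d u c := by
  rcases hproj with ⟨-, rfl⟩ | ⟨hcS, hbS, hmin⟩
  · exact le_rfl
  · have hbc : b ≠ c := fun h => hcS (h ▸ hbS)
    have huc : u ≠ c := fun h => hcS (h ▸ huS)
    have hbu : d b c ≤ d u c := by
      rw [hsymm b c hbc, hsymm u c huc]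
      exact hmin u huS
    exact (hultra u b c hub huc hbc).trans (max_le le_rfl hbu)

lemma IsProj.mem {S : Finset E} {c b : E} (hproj : IsProj d S c b) : b ∈ S := by
  rcases hproj with ⟨hcS, rfl⟩ | ⟨-, hbS, -⟩
  exacts [hcS, hbS]

lemma IsSeqProj.injOn {A : Finset E} {k : ℕ} {c v : ℕ → E} (hv : IsSeqProj d A k c v) :
    Set.InjOn v (range k) := by
  have hfresh : ∀ {i j}, j < i → i < k → v i ≠ v j := fun hji hi hij =>
    (mem_sdiff.mp (hv _ hi).mem).2 (mem_image.mpr ⟨_, mem_range.mpr hji, hij.symm⟩)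
  intro i hi j hj hij
  rcases lt_trichotomy i j with h | h | h
  exacts [(hfresh h (mem_range.mp hj) hij.symm).elim, h, (hfresh h (mem_range.mp hi) hij).elim]

end projection

theorem stmt2_general {E : Type*} [DecidableEq E] (d : E → E → ℝ)
    (hsymm : ∀ a b : E, a ≠ b → d a b = d b a)
    (hultra : ∀ a b c : E, a ≠ b → a ≠ c → b ≠ c → d a b ≤ max (d a c) (d b c))
    (r k : ℕ) (c : ℕ → E)
    (hcinj : ∀ i < k, ∀ j < k, c i = c j → i = j)
    (A : Finset E)
    (v : ℕ → E) (hv : IsSeqProj d A k c v) :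
    ∀ u ∈ A \ (Finset.range k).image v,
      distR d r ((Finset.range k).image v) u ≤ distR d r ((Finset.range k).image c) u := by
  intro u hu
  obtain ⟨huA, hunv⟩ := mem_sdiff.mp hu
  refine distR_image_le_image d r hv.injOn
    (fun i hi j hj => hcinj i (mem_range.mp hi) j (mem_range.mp hj)) fun i hi => ?_
  have hi : i < k := mem_range.mp hi
  have huS : u ∈ A \ (range i).image v := mem_sdiff.mpr ⟨huA, fun h =>
    hunv (image_subset_image (range_subset_range.mpr hi.le) h)⟩
  exact (hv i hi).dist_le hsymm hultra huS
    fun h => hunv (mem_image.mpr ⟨i, mem_range.mpr hi, h.symm⟩)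

theorem stmt2 {E : Type*} [DecidableEq E] (w : E → ℝ) (d : E → E → ℝ)
    (hsymm : ∀ a b : E, a ≠ b → d a b = d b a)
    (hultra : ∀ a b c : E, a ≠ b → a ≠ c → b ≠ c → d a b ≤ max (d a c) (d b c))
    (r k n : ℕ) (hkn : k < n) (c : ℕ → E)
    (hcinj : ∀ i < k, ∀ j < k, c i = c j → i = j)
    (A : Finset E) (hAcard : A.card = n)
    (v : ℕ → E) (hv : IsSeqProj d A k c v) :
    ∀ u ∈ A \ (Finset.range k).image v,
      distR d r ((Finset.range k).image v) u ≤ distR d r ((Finset.range k).image c) u :=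
  stmt2_general d hsymm hultra r k c hcinj A v hv
end

section
/- Let (E,w,d) be an ultra triple and r ≥ 0 an integer. For any finite set C ⊆ E and distinct points x, y ∈ E \ C, we have dist_r(C, x) + dist_r(C ∪ {x}, y) = dist_r(C, y) + dist_r(C ∪ {y}, x). -/
open Finset

lemma add_sup' {β : Type*} (s : Finset β) (hs : s.Nonempty) (f : β → ℝ) (a : ℝ) :
    a + s.sup' hs f = s.sup' hs (fun b => a + f b) := by
  apply le_antisymm
  · obtain ⟨b, hb, hbe⟩ := Finset.exists_mem_eq_sup' hs f
    rw [hbe]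
    exact Finset.le_sup' (fun b => a + f b) hb
  · exact Finset.sup'_le _ _ fun b hb => add_le_add_right (Finset.le_sup' f hb) a

lemma distR_eq_sup' {E : Type*} [DecidableEq E] (d : E → E → ℝ) (r : ℕ) (C : Finset E) (v : E)
    (h : r ≤ C.card) :
    distR d r C v = (C.powersetCard (C.card - r)).sup'
      (Finset.powersetCard_nonempty.2 (Nat.sub_le _ _)) (fun A => ∑ x ∈ A, d v x) := by
  unfold distR
  by_cases hc : C.card ≤ r
  · have hcr : C.card - r = 0 := by omega
    rw [if_pos hc]
    apply le_antisymm
    · have h0 : (0:ℝ) = (fun A => ∑ x ∈ A, d v x) (∅ : Finset E) := by simp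
      rw [h0]
      exact Finset.le_sup' (fun A => ∑ x ∈ A, d v x)
        (by rw [Finset.mem_powersetCard]; exact ⟨Finset.empty_subset _, by simp [hcr]⟩)
    · apply Finset.sup'_le
      intro B hB
      rw [Finset.mem_powersetCard, hcr] at hB
      rw [Finset.card_eq_zero.1 hB.2]
      simp
  · rw [if_neg hc]
    have hset : {s : ℝ | ∃ A ⊆ C, A.card = C.card - r ∧ s = ∑ x ∈ A, d v x}
        = ↑((C.powersetCard (C.card - r)).image (fun A => ∑ x ∈ A, d v x)) := by
      ext s
      simp only [Finset.coe_image, Set.mem_image, Finset.mem_coe, Finset.mem_powersetCard,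
        Set.mem_setOf_eq]
      constructor
      · rintro ⟨A, hA, hcard, rfl⟩; exact ⟨A, ⟨hA, hcard⟩, rfl⟩
      · rintro ⟨A, ⟨hA, hcard⟩, rfl⟩; exact ⟨A, hA, hcard, rfl⟩
    have hne : ((C.powersetCard (C.card - r)).image (fun A => ∑ x ∈ A, d v x)).Nonempty :=
      (Finset.powersetCard_nonempty.2 (Nat.sub_le _ _)).image _
    rw [hset, hne.csSup_eq_max', Finset.max'_eq_sup', Finset.sup'_image]
    rfl

lemma distR_insert_split {E : Type*} [DecidableEq E] (d : E → E → ℝ) (r : ℕ) (C : Finset E)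
    (x v : E) (hx : x ∉ C) (hr : 1 ≤ r) (h : r ≤ C.card) :
    distR d r (insert x C) v = max (distR d (r-1) C v) (d v x + distR d r C v) := by
  have hcard : (insert x C).card = C.card + 1 := Finset.card_insert_of_notMem hx
  have h1 : r ≤ (insert x C).card := by omega
  have hk : (insert x C).card - r = C.card - (r - 1) := by omega
  have hk2 : C.card - (r-1) = (C.card - r) + 1 := by omega
  rw [distR_eq_sup' d r (insert x C) v h1, distR_eq_sup' d (r-1) C v (by omega),
    distR_eq_sup' d r C v h]
  apply le_antisymm
  · apply Finset.sup'_le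
    intro B hB
    rw [Finset.mem_powersetCard] at hB
    obtain ⟨hBsub, hBcard⟩ := hB
    by_cases hxB : x ∈ B
    · refine le_max_of_le_right ?_
      have hsub : B.erase x ⊆ C := by
        intro a ha
        have := hBsub (Finset.mem_of_mem_erase ha)
        rcases Finset.mem_insert.1 this with h' | h'
        · exact absurd h' (Finset.ne_of_mem_erase ha)
        · exact h'
      have hmem : B.erase x ∈ C.powersetCard (C.card - r) := by
        rw [Finset.mem_powersetCard]
        refine ⟨hsub, ?_⟩
        rw [Finset.card_erase_of_mem hxB]
        omega
      have : (∑ a ∈ B, d v a) = d v x + ∑ a ∈ B.erase x, d v a :=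
        (Finset.add_sum_erase _ _ hxB).symm
      rw [this]
      exact add_le_add_right (Finset.le_sup' (fun A => ∑ a ∈ A, d v a) hmem) _
    · refine le_max_of_le_left ?_
      have hsub : B ⊆ C := by
        intro a ha
        rcases Finset.mem_insert.1 (hBsub ha) with h' | h'
        · exact absurd (h' ▸ ha) hxB
        · exact h'
      have hmem : B ∈ C.powersetCard (C.card - (r-1)) := by
        rw [Finset.mem_powersetCard]
        exact ⟨hsub, by omega⟩
      exact Finset.le_sup' (fun A => ∑ a ∈ A, d v a) hmem
  · apply max_le
    · apply Finset.sup'_le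
      intro A hA
      rw [Finset.mem_powersetCard] at hA
      have hmem : A ∈ (insert x C).powersetCard ((insert x C).card - r) := by
        rw [Finset.mem_powersetCard]
        exact ⟨hA.1.trans (Finset.subset_insert _ _), by omega⟩
      exact Finset.le_sup' (fun A => ∑ a ∈ A, d v a) hmem
    · rw [_root_.add_sup']
      apply Finset.sup'_le
      intro A hA
      rw [Finset.mem_powersetCard] at hA
      have hxA : x ∉ A := fun hxa => hx (hA.1 hxa)
      have : d v x + ∑ a ∈ A, d v a = ∑ a ∈ insert x A, d v a :=
        (Finset.sum_insert hxA).symm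
      rw [this]
      have hmem : insert x A ∈ (insert x C).powersetCard ((insert x C).card - r) := by
        rw [Finset.mem_powersetCard]
        constructor
        · exact Finset.insert_subset_insert _ hA.1
        · rw [Finset.card_insert_of_notMem hxA]; omega
      exact Finset.le_sup' (fun A => ∑ a ∈ A, d v a) hmem

lemma key_ineq {E : Type*} [DecidableEq E] (d : E → E → ℝ)
    (hsymm : ∀ a b : E, a ≠ b → d a b = d b a)
    (hultra : ∀ a b c : E, a ≠ b → a ≠ c → b ≠ c → d a b ≤ max (d a c) (d b c))
    (r : ℕ) (C : Finset E) (x y : E) (hx : x ∉ C) (hy : y ∉ C) (hxy : x ≠ y)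
    (hr : 1 ≤ r) (h : r ≤ C.card) :
    distR d r C x + distR d (r-1) C y ≤
      max (distR d r C y + distR d (r-1) C x) (d x y + (distR d r C x + distR d r C y)) := by
  obtain ⟨A, hA, hAeq⟩ := Finset.exists_mem_eq_sup' (s := C.powersetCard (C.card - r))
    (Finset.powersetCard_nonempty.2 (Nat.sub_le _ _)) (fun A => ∑ a ∈ A, d x a)
  obtain ⟨B, hB, hBeq⟩ := Finset.exists_mem_eq_sup' (s := C.powersetCard (C.card - (r-1)))
    (Finset.powersetCard_nonempty.2 (Nat.sub_le _ _)) (fun A => ∑ a ∈ A, d y a)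
  rw [Finset.mem_powersetCard] at hA hB
  have hABcard : A.card < B.card := by omega
  -- c₀ ∈ B \ A
  obtain ⟨c₀, hc₀B, hc₀A⟩ : ∃ c₀ ∈ B, c₀ ∉ A := by
    by_contra hcon
    push_neg at hcon
    exact absurd (Finset.card_le_card hcon) (by omega)
  have hc₀C : c₀ ∈ C := hB.1 hc₀B
  have hc₀x : c₀ ≠ x := fun he => hx (he ▸ hc₀C)
  have hc₀y : c₀ ≠ y := fun he => hy (he ▸ hc₀C)
  have hsplitB : (∑ a ∈ B, d y a) = d y c₀ + ∑ a ∈ B.erase c₀, d y a :=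
    (Finset.add_sum_erase _ _ hc₀B).symm
  have heraseB : ∑ a ∈ B.erase c₀, d y a ≤ distR d r C y := by
    rw [distR_eq_sup' d r C y h]
    refine Finset.le_sup' (fun A => ∑ a ∈ A, d y a) ?_
    rw [Finset.mem_powersetCard]
    refine ⟨(Finset.erase_subset _ _).trans hB.1, ?_⟩
    rw [Finset.card_erase_of_mem hc₀B]
    omega
  have hsumA : ∑ a ∈ A, d x a ≤ distR d r C x := by
    rw [distR_eq_sup' d r C x h, hAeq]
  have hL : distR d r C x + distR d (r-1) C y = (∑ a ∈ A, d x a) + ∑ a ∈ B, d y a := by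
    rw [distR_eq_sup' d r C x h, distR_eq_sup' d (r-1) C y (by omega), hAeq, hBeq]
  rw [hL]
  by_cases hc : d y c₀ ≤ d x y
  · refine le_max_of_le_right ?_
    rw [hsplitB]
    calc (∑ a ∈ A, d x a) + (d y c₀ + ∑ a ∈ B.erase c₀, d y a)
        ≤ distR d r C x + (d x y + distR d r C y) :=
          add_le_add hsumA (add_le_add hc heraseB)
      _ = d x y + (distR d r C x + distR d r C y) := by ring
  · refine le_max_of_le_left ?_
    push_neg at hc
    have hu : d y c₀ ≤ max (d y x) (d c₀ x) := hultra y c₀ x hc₀y.symm (Ne.symm hxy) hc₀x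
    rw [hsymm y x (Ne.symm hxy)] at hu
    have hyc : d y c₀ ≤ d c₀ x := by
      rcases max_cases (d x y) (d c₀ x) with ⟨he, _⟩ | ⟨he, _⟩
      · rw [he] at hu; linarith
      · rwa [he] at hu
    rw [hsymm c₀ x hc₀x] at hyc
    have hinsert : d x c₀ + ∑ a ∈ A, d x a ≤ distR d (r-1) C x := by
      rw [distR_eq_sup' d (r-1) C x (by omega)]
      have : d x c₀ + ∑ a ∈ A, d x a = ∑ a ∈ insert c₀ A, d x a := (Finset.sum_insert hc₀A).symm
      rw [this]
      refine Finset.le_sup' (fun A => ∑ a ∈ A, d x a) ?_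
      rw [Finset.mem_powersetCard]
      refine ⟨Finset.insert_subset hc₀C hA.1, ?_⟩
      rw [Finset.card_insert_of_notMem hc₀A]
      omega
    rw [hsplitB]
    calc (∑ a ∈ A, d x a) + (d y c₀ + ∑ a ∈ B.erase c₀, d y a)
        ≤ (∑ a ∈ A, d x a) + (d x c₀ + distR d r C y) :=
          add_le_add_right (add_le_add hyc heraseB) _
      _ = (d x c₀ + ∑ a ∈ A, d x a) + distR d r C y := by ring
      _ ≤ distR d r C y + distR d (r-1) C x := by
          rw [add_comm (distR d r C y)]
          exact add_le_add_left hinsert _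

theorem stmt3 {E : Type*} [DecidableEq E] (w : E → ℝ) (d : E → E → ℝ)
    (hsymm : ∀ a b : E, a ≠ b → d a b = d b a)
    (hultra : ∀ a b c : E, a ≠ b → a ≠ c → b ≠ c → d a b ≤ max (d a c) (d b c))
    (r : ℕ) (C : Finset E) (x y : E) (hx : x ∉ C) (hy : y ∉ C) (hxy : x ≠ y) :
    distR d r C x + distR d r (insert x C) y = distR d r C y + distR d r (insert y C) x := by
  by_cases h : r ≤ C.card
  · rcases Nat.eq_zero_or_pos r with hr0 | hr1
    · subst hr0
      have e1 : ∀ (v : E) (D : Finset E), distR d 0 D v = ∑ a ∈ D, d v a := by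
        intro v D
        rw [distR_eq_sup' d 0 D v (Nat.zero_le _)]
        apply le_antisymm
        · apply Finset.sup'_le
          intro B hB
          rw [Finset.mem_powersetCard] at hB
          rw [Finset.eq_of_subset_of_card_le hB.1 (by omega)]
        · exact Finset.le_sup' (fun A => ∑ a ∈ A, d v a)
            (by rw [Finset.mem_powersetCard]; exact ⟨Finset.Subset.refl _, by omega⟩)
      rw [e1, e1, e1, e1, Finset.sum_insert hx, Finset.sum_insert hy,
        hsymm y x (Ne.symm hxy)]
      ring
    · rw [distR_insert_split d r C x y hx hr1 h, distR_insert_split d r C y x hy hr1 h,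
        hsymm y x (Ne.symm hxy)]
      have h1 := key_ineq d hsymm hultra r C x y hx hy hxy hr1 h
      have h2 := key_ineq d hsymm hultra r C y x hy hx (Ne.symm hxy) hr1 h
      rw [hsymm y x (Ne.symm hxy)] at h2
      set a := distR d r C x
      set b := distR d r C y
      set a' := distR d (r-1) C x
      set b' := distR d (r-1) C y
      set D := d x y
      rw [← max_add_add_left, ← max_add_add_left]
      apply le_antisymm
      · apply max_le
        · calc a + b' ≤ max (b + a') (D + (a + b)) := h1
            _ = max (b + a') (b + (D + a)) := by rw [show D + (a + b) = b + (D + a) by ring]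
        · rw [show a + (D + b) = b + (D + a) by ring]
          exact le_max_right _ _
      · apply max_le
        · calc b + a' ≤ max (a + b') (D + (b + a)) := h2
            _ = max (a + b') (a + (D + b)) := by rw [show D + (b + a) = a + (D + b) by ring]
        · rw [show b + (D + a) = a + (D + b) by ring]
          exact le_max_right _ _
  · have h1 : C.card ≤ r := by omega
    have h2 : (insert x C).card ≤ r := by rw [Finset.card_insert_of_notMem hx]; omega
    have h3 : (insert y C).card ≤ r := by rw [Finset.card_insert_of_notMem hy]; omega
    simp [distR, h1, h2, h3]
end

section
/- Let (E,w,d) be an ultra triple and r a non-negative integer. Then any two orderings (permutations) of a finite subset A ⊆ E have the same r-removed perimeter. In particular, the r-removed perimeter per_r(A) of a finite set A is well-defined. -/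
/-!
Any two orderings of a finite set differ by adjacent transpositions, so it suffices that swapping
two consecutive points `a, b` preceded by a set `S` leaves the perimeter unchanged, i.e. that
`dist_r(S, a) + dist_r(S ∪ {a}, b) = dist_r(S, b) + dist_r(S ∪ {b}, a)`.

Write `t = d(a, b)`. By the ultrametric inequality, the points of `S` farther than `t` from `a`
are exactly those farther than `t` from `b`, at the same distances. The `r`-removed distance is a
largest sum of `|S| - r` distances. If this common far set has more than `|S| - r` points, the
largest sums only use far points, so adding `a` or `b` to `S` changes nothing and both sides agree.
Otherwise the new point contributes exactly `t`, and both sides equal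
`t + dist_r(S, a) + dist_r(S, b)`.
-/

open Finset

noncomputable def maxSum {E : Type*} (f : E → ℝ) (n : ℕ) (C : Finset E) : ℝ :=
  sSup {s : ℝ | ∃ A ⊆ C, #A = n ∧ s = ∑ x ∈ A, f x}

section MaxSum

variable {E : Type*}

lemma maxSum_set_finite (f : E → ℝ) (n : ℕ) (C : Finset E) :
    {s : ℝ | ∃ A ⊆ C, #A = n ∧ s = ∑ x ∈ A, f x}.Finite :=
  ((C.powersetCard n).image fun A => ∑ x ∈ A, f x).finite_toSet.subset <| by
    rintro s ⟨A, hA, hc, rfl⟩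
    exact mem_image_of_mem _ (mem_powersetCard.2 ⟨hA, hc⟩)

lemma le_maxSum (f : E → ℝ) {n : ℕ} {C A : Finset E} (hA : A ⊆ C) (hc : #A = n) :
    ∑ x ∈ A, f x ≤ maxSum f n C :=
  le_csSup (maxSum_set_finite f n C).bddAbove ⟨A, hA, hc, rfl⟩

lemma exists_maxSum (f : E → ℝ) (C : Finset E) {n : ℕ} (hn : n ≤ #C) :
    ∃ A ⊆ C, #A = n ∧ maxSum f n C = ∑ x ∈ A, f x := by
  obtain ⟨A, hA, hc⟩ := exists_subset_card_eq hn
  refine Set.Nonempty.csSup_mem ?_ (maxSum_set_finite f n C)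
  exact ⟨_, A, hA, hc, rfl⟩

lemma maxSum_zero (f : E → ℝ) (C : Finset E) : maxSum f 0 C = 0 := by
  obtain ⟨A, -, hA, h⟩ := exists_maxSum f C (Nat.zero_le _)
  rw [h, card_eq_zero.1 hA, sum_empty]

lemma maxSum_mono {f : E → ℝ} {n : ℕ} {C D : Finset E} (hCD : C ⊆ D) (hn : n ≤ #C) :
    maxSum f n C ≤ maxSum f n D := by
  obtain ⟨A, hA, hc, h⟩ := exists_maxSum f C hn
  exact h ▸ le_maxSum f (hA.trans hCD) hc

lemma maxSum_congr {f g : E → ℝ} {n : ℕ} {C : Finset E} (hfg : ∀ x ∈ C, f x = g x) :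
    maxSum f n C = maxSum g n C := by
  unfold maxSum
  congr 1
  ext s
  refine exists_congr fun A => and_congr_right fun hA => ?_
  rw [sum_congr rfl fun x hx => hfg x (hA hx)]

lemma maxSum_filter_lt (f : E → ℝ) (t : ℝ) {n : ℕ} {C : Finset E}
    (hn : n ≤ #{x ∈ C | t < f x}) : maxSum f n {x ∈ C | t < f x} = maxSum f n C := by
  classical
  set H := {x ∈ C | t < f x}
  refine le_antisymm (maxSum_mono (filter_subset _ _) hn) ?_
  obtain ⟨B, hB, hBc, hBe⟩ := exists_maxSum f C (hn.trans (card_le_card (filter_subset _ _)))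
  rw [hBe]
  -- replace the elements of `B` outside `H` (values `≤ t`) by as many elements of `H \ B` (`> t`)
  have hcard : #(B \ H) ≤ #(H \ B) := by
    have h1 := card_inter_add_card_sdiff B H
    have h2 := card_inter_add_card_sdiff H B
    rw [inter_comm] at h2
    omega
  obtain ⟨T, hT, hTc⟩ := exists_subset_card_eq hcard
  have hdisj : Disjoint (B ∩ H) T :=
    disjoint_left.2 fun x hx hxT => (mem_sdiff.1 (hT hxT)).2 (mem_inter.1 hx).1
  have hout : ∑ x ∈ B \ H, f x ≤ #(B \ H) • t := by
    refine sum_le_card_nsmul _ _ _ fun x hx => ?_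
    obtain ⟨hxB, hxH⟩ := mem_sdiff.1 hx
    exact not_lt.1 fun h => hxH (mem_filter.2 ⟨hB hxB, h⟩)
  have hin : #T • t ≤ ∑ x ∈ T, f x :=
    card_nsmul_le_sum _ _ _ fun x hx => (mem_filter.1 (mem_sdiff.1 (hT hx)).1).2.le
  calc ∑ x ∈ B, f x = ∑ x ∈ B ∩ H, f x + ∑ x ∈ B \ H, f x := (sum_inter_add_sum_sdiff B H f).symm
    _ ≤ ∑ x ∈ B ∩ H, f x + ∑ x ∈ T, f x := by
      rw [hTc, nsmul_eq_mul] at hin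
      rw [nsmul_eq_mul] at hout
      linarith
    _ = ∑ x ∈ (B ∩ H) ∪ T, f x := (sum_union hdisj).symm
    _ ≤ maxSum f n H := by
      refine le_maxSum f (union_subset inter_subset_right (hT.trans sdiff_subset)) ?_
      have := card_inter_add_card_sdiff B H
      rw [card_union_of_disjoint hdisj, hTc]
      omega

variable [DecidableEq E]

lemma maxSum_insert_of_card_filter_le (f : E → ℝ) {C : Finset E} {a : E} (ha : a ∉ C) {m : ℕ}
    (hm : m ≤ #C) (hfil : #{x ∈ C | f a < f x} ≤ m) :
    maxSum f (m + 1) (insert a C) = f a + maxSum f m C := by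
  apply le_antisymm
  · obtain ⟨B, hB, hBc, hBe⟩ :=
      exists_maxSum f (insert a C) (n := m + 1) (by rw [card_insert_of_notMem ha]; omega)
    obtain ⟨y, hyB, hy, hBy⟩ : ∃ y ∈ B, f y ≤ f a ∧ B.erase y ⊆ C := by
      by_cases haB : a ∈ B
      · exact ⟨a, haB, le_rfl, subset_insert_iff.1 hB⟩
      · have hBC := (subset_insert_iff_of_notMem haB).1 hB
        obtain ⟨y, hyB, hy⟩ : ∃ y ∈ B, ¬ f a < f y := by
          by_contra! hcon
          have := card_le_card fun x hx => mem_filter.2 ⟨hBC hx, hcon x hx⟩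
          omega
        exact ⟨y, hyB, not_lt.1 hy, (erase_subset y B).trans hBC⟩
    rw [hBe, ← add_sum_erase B f hyB]
    exact add_le_add hy (le_maxSum f hBy (by rw [card_erase_of_mem hyB, hBc]; rfl))
  · obtain ⟨B, hB, hBc, hBe⟩ := exists_maxSum f C hm
    have haB : a ∉ B := fun h => ha (hB h)
    rw [hBe, ← sum_insert haB]
    exact le_maxSum f (insert_subset_insert a hB) (by rw [card_insert_of_notMem haB, hBc])

lemma maxSum_insert_of_le_card_filter (f : E → ℝ) {C : Finset E} {a : E} (ha : a ∉ C) {m : ℕ}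
    (hfil : m ≤ #{x ∈ C | f a < f x}) : maxSum f m (insert a C) = maxSum f m C := by
  have hm : m ≤ #C := hfil.trans (card_le_card (filter_subset _ _))
  refine le_antisymm ?_ (maxSum_mono (subset_insert a C) hm)
  obtain ⟨B, hB, hBc, hBe⟩ :=
    exists_maxSum f (insert a C) (n := m) (by rw [card_insert_of_notMem ha]; omega)
  rw [hBe]
  by_cases haB : a ∈ B
  · have hB' : #(B.erase a) < #{x ∈ C | f a < f x} := by
      rw [card_erase_of_mem haB, hBc]
      exact Nat.sub_one_lt_of_le (card_pos.2 ⟨a, haB⟩ |>.trans_eq hBc) hfil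
    obtain ⟨x, hx, hxB⟩ := exists_mem_notMem_of_card_lt_card hB'
    obtain ⟨hxC, hax⟩ := mem_filter.1 hx
    calc ∑ y ∈ B, f y = f a + ∑ y ∈ B.erase a, f y := (add_sum_erase B f haB).symm
      _ ≤ f x + ∑ y ∈ B.erase a, f y := by gcongr
      _ = ∑ y ∈ insert x (B.erase a), f y := (sum_insert hxB).symm
      _ ≤ maxSum f m C := by
        refine le_maxSum f (insert_subset hxC (subset_insert_iff.1 hB)) ?_
        rw [card_insert_of_notMem hxB, card_erase_of_mem haB, hBc]
        have := card_pos.2 ⟨a, haB⟩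
        omega
  · exact le_maxSum f ((subset_insert_iff_of_notMem haB).1 hB) hBc

/-- The exchange identity behind the swap of two consecutive points `a`, `b`: `f` and `g` play the
roles of the distances from `a` and from `b`, and `f b = g a` that of `d(a, b)`. -/
lemma maxSum_add_maxSum_insert_comm (f g : E → ℝ) {S : Finset E} {a b : E} (ha : a ∉ S)
    (hb : b ∉ S) (hfg : f b = g a) (hagree : ∀ x ∈ S, f b < f x ∨ f b < g x → f x = g x)
    {n : ℕ} (hn : n ≤ #S) :
    maxSum f n S + maxSum g (n + 1) (insert a S) =
      maxSum g n S + maxSum f (n + 1) (insert b S) := by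
  set t := f b
  have hH : {x ∈ S | t < f x} = {x ∈ S | t < g x} := by
    ext x
    simp only [mem_filter, and_congr_right_iff]
    intro hx
    constructor <;> intro h
    · rwa [← hagree x hx (Or.inl h)]
    · rwa [hagree x hx (Or.inr h)]
  rcases le_or_gt #{x ∈ S | t < f x} n with hlow | hhigh
  · rw [maxSum_insert_of_card_filter_le g ha hn (by rwa [← hfg, ← hH]),
      maxSum_insert_of_card_filter_le f hb hn hlow, ← hfg]
    ring
  · have hcongr : ∀ k ≤ #{x ∈ S | t < f x}, maxSum f k S = maxSum g k S := by
      intro k hk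
      rw [← maxSum_filter_lt f t hk, ← maxSum_filter_lt g t (hH ▸ hk), ← hH]
      exact maxSum_congr fun x hx => hagree x (mem_filter.1 hx).1 (Or.inl (mem_filter.1 hx).2)
    rw [maxSum_insert_of_le_card_filter g ha (by rwa [← hfg, ← hH]),
      maxSum_insert_of_le_card_filter f hb hhigh, hcongr n hhigh.le, hcongr (n + 1) hhigh]

end MaxSum

section Ultra

variable {E : Type*}

lemma ultra_eq_of_lt (d : E → E → ℝ) (hsymm : ∀ a b : E, a ≠ b → d a b = d b a)
    (hultra : ∀ a b c : E, a ≠ b → a ≠ c → b ≠ c → d a b ≤ max (d a c) (d b c))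
    {a b x : E} (hab : a ≠ b) (hax : a ≠ x) (hbx : b ≠ x) (hlt : d a b < d a x) :
    d a x = d b x := by
  have h1 := hultra b x a hbx hab.symm hax.symm
  have h2 := hultra a x b hax hab hbx.symm
  rw [hsymm x a hax.symm, hsymm b a hab.symm] at h1
  rw [hsymm x b hbx.symm] at h2
  have hba : d b x ≤ d a x := h1.trans (max_le hlt.le le_rfl)
  rcases le_max_iff.1 h2 with h | h <;> linarith

variable [DecidableEq E]

lemma distR_eq_maxSum (d : E → E → ℝ) (r : ℕ) (C : Finset E) (v : E) :
    distR d r C v = maxSum (d v) (#C - r) C := by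
  rw [distR]
  split_ifs with h
  · rw [Nat.sub_eq_zero_of_le h, maxSum_zero]
  · rfl

lemma distR_add_distR_insert_comm (d : E → E → ℝ) (hsymm : ∀ a b : E, a ≠ b → d a b = d b a)
    (hultra : ∀ a b c : E, a ≠ b → a ≠ c → b ≠ c → d a b ≤ max (d a c) (d b c))
    (r : ℕ) {S : Finset E} {a b : E} (ha : a ∉ S) (hb : b ∉ S) (hab : a ≠ b) :
    distR d r S a + distR d r (insert a S) b = distR d r S b + distR d r (insert b S) a := by
  simp only [distR_eq_maxSum, card_insert_of_notMem ha, card_insert_of_notMem hb]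
  rcases le_or_gt r #S with hr | hr
  · rw [show #S + 1 - r = #S - r + 1 by omega]
    refine maxSum_add_maxSum_insert_comm (d a) (d b) ha hb (hsymm a b hab) ?_ (Nat.sub_le _ _)
    intro x hx hlt
    have hax : a ≠ x := fun h => ha (h ▸ hx)
    have hbx : b ≠ x := fun h => hb (h ▸ hx)
    rcases hlt with h | h
    · exact ultra_eq_of_lt d hsymm hultra hab hax hbx h
    · rw [hsymm a b hab] at h
      exact (ultra_eq_of_lt d hsymm hultra hab.symm hbx hax h).symm
  · simp only [Nat.sub_eq_zero_of_le hr.le, Nat.sub_eq_zero_of_le (Nat.succ_le_of_lt hr),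
      maxSum_zero]

lemma perList_eq_of_perm (w : E → ℝ) (d : E → E → ℝ) (hsymm : ∀ a b : E, a ≠ b → d a b = d b a)
    (hultra : ∀ a b c : E, a ≠ b → a ≠ c → b ≠ c → d a b ≤ max (d a c) (d b c))
    (r : ℕ) {l₁ l₂ : List E} (hp : l₁.Perm l₂) (hnd : l₁.Nodup) :
    perList w d r l₁ = perList w d r l₂ := by
  induction hp with
  | nil => rfl
  | cons x h ih =>
    simp only [perList]
    rw [ih (List.nodup_cons.1 hnd).2, List.toFinset_eq_of_perm _ _ h]
  | swap x y l =>
    simp only [List.nodup_cons, List.mem_cons, not_or] at hnd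
    obtain ⟨⟨hyx, hyl⟩, hxl, -⟩ := hnd
    simp only [perList, List.toFinset_cons]
    have := distR_add_distR_insert_comm d hsymm hultra r (S := l.toFinset)
      (List.mem_toFinset.not.2 hyl) (List.mem_toFinset.not.2 hxl) hyx
    linarith
  | trans h₁ _ ih₁ ih₂ => exact (ih₁ hnd).trans (ih₂ (h₁.nodup_iff.1 hnd))

end Ultra

theorem stmt4 {E : Type*} [DecidableEq E] (w : E → ℝ) (d : E → E → ℝ)
    (hsymm : ∀ a b : E, a ≠ b → d a b = d b a)
    (hultra : ∀ a b c : E, a ≠ b → a ≠ c → b ≠ c → d a b ≤ max (d a c) (d b c))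
    (r : ℕ) (l₁ l₂ : List E) (h₁ : l₁.Nodup) (h₂ : l₂.Nodup)
    (h : l₁.toFinset = l₂.toFinset) :
    perList w d r l₁ = perList w d r l₂ :=
  perList_eq_of_perm w d hsymm hultra r (List.perm_of_nodup_nodup_toFinset_eq h₁ h₂ h) h₁
end

section
/- Let (E,w,d) be an ultra triple and let f = (f_n)_{n≥1} be a sequence of non-decreasing functions ℝ → ℝ. For a finite set C = {c_1,…,c_n} ⊆ E and x ∈ E \ C, define dist_f(C,x) := Σ_{i=1}^n f_i(d_i), where (d_1,…,d_n) is the list of distances d(c_1,x),…,d(c_n,x) arranged in non-decreasing order. Then dist_f satisfies property (S1): for any finite C ⊆ E and distinct x, y ∈ E \ C, dist_f(C,x) + dist_f(C ∪ {x}, y) = dist_f(C,y) + dist_f(C ∪ {y}, x). -/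
/-!
Put `t = d x y`. By the ultrametric inequality, `d x c` and `d y c` coincide as soon as one of
them exceeds `t`; so the multisets of distances from `x` and from `y` to `C` have the same size
and the same entries above `t`. Inserting `t` into a multiset places it right after the entries
`≤ t` in sorted order, so the resulting change of the ranked sum `∑ fᵢ(dᵢ)` depends only on the
number of entries `≤ t` and on the entries above `t`. Hence adding `t = d y x` to the distances
from `y` and adding `t` to those from `x` change `dist_f` by the same amount.
-/

open Finset

section RankedSum

variable {α β : Type*} [AddCommMonoid β]

def rankedSum (f : ℕ → α → β) (k : ℕ) (l : List α) : β :=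
  (l.mapIdx fun i a => f (k + i + 1) a).sum

theorem rankedSum_append (f : ℕ → α → β) (k : ℕ) (l₁ l₂ : List α) :
    rankedSum f k (l₁ ++ l₂) = rankedSum f k l₁ + rankedSum f (k + l₁.length) l₂ := by
  simp only [rankedSum, List.mapIdx_append, List.sum_append]
  congr 3
  ext i a
  ring_nf

theorem rankedSum_cons (f : ℕ → α → β) (k : ℕ) (a : α) (l : List α) :
    rankedSum f k (a :: l) = f (k + 1) a + rankedSum f (k + 1) l := by
  simp only [rankedSum, List.mapIdx_cons, List.sum_cons]
  congr 3
  ext i a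
  ring_nf

theorem rankedSum_eq_sum_getD [Zero α] (f : ℕ → α → β) (k : ℕ) (l : List α) :
    rankedSum f k l = ∑ i ∈ range l.length, f (k + i + 1) (l.getD i 0) := by
  induction l generalizing k with
  | nil => simp [rankedSum]
  | cons a l ih =>
    rw [rankedSum_cons, ih, List.length_cons, sum_range_succ', add_comm]
    simp only [List.getD_cons_succ, List.getD_cons_zero, add_zero]
    congr 2
    ext i
    ring_nf

end RankedSum

namespace Multiset

variable {α : Type*} [LinearOrder α]

theorem filter_le_add_filter_lt (s : Multiset α) (t : α) :
    s.filter (· ≤ t) + s.filter (t < ·) = s := by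
  simpa only [not_le] using filter_add_not (· ≤ t) s

theorem sort_add_of_forall_le {s t : Multiset α} (h : ∀ a ∈ s, ∀ b ∈ t, a ≤ b) :
    sort (s + t) = sort s ++ sort t := by
  refine List.Perm.eq_of_pairwise' (pairwise_sort _ _) ?_ (coe_eq_coe.mp ?_)
  · exact List.pairwise_append.mpr ⟨pairwise_sort _ _, pairwise_sort _ _,
      fun a ha b hb => h a ((mem_sort _).mp ha) b ((mem_sort _).mp hb)⟩
  · rw [← coe_add, sort_eq, sort_eq, sort_eq]

theorem sort_eq_sort_filter_le_append (s : Multiset α) (t : α) :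
    sort s = sort (s.filter (· ≤ t)) ++ sort (s.filter (t < ·)) := by
  conv_lhs => rw [← filter_le_add_filter_lt s t]
  refine sort_add_of_forall_le fun a ha b hb => ?_
  exact (of_mem_filter ha).trans (of_mem_filter hb).le

theorem sort_cons_eq (s : Multiset α) (t : α) :
    sort (t ::ₘ s) = sort (s.filter (· ≤ t)) ++ t :: sort (s.filter (t < ·)) := by
  conv_lhs => rw [← filter_le_add_filter_lt s t, ← add_cons]
  rw [sort_add_of_forall_le, sort_cons]
  · exact fun b hb => (of_mem_filter hb).le
  · intro a ha b hb
    have hat : a ≤ t := (mem_filter.mp ha).2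
    rcases mem_cons.mp hb with hb | hb
    · exact hb ▸ hat
    · exact hat.trans (of_mem_filter hb).le

end Multiset

section SortedSum

variable {α β : Type*} [LinearOrder α] [AddCommMonoid β]

def sortedSum (f : ℕ → α → β) (s : Multiset α) : β :=
  rankedSum f 0 (s.sort (· ≤ ·))

theorem sortedSum_eq_rankedSum_filter (f : ℕ → α → β) (s : Multiset α) (t : α) :
    sortedSum f s = rankedSum f 0 ((s.filter (· ≤ t)).sort (· ≤ ·)) +
      rankedSum f (Multiset.card (s.filter (· ≤ t))) ((s.filter (t < ·)).sort (· ≤ ·)) := by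
  rw [sortedSum, Multiset.sort_eq_sort_filter_le_append s t, rankedSum_append,
    Multiset.length_sort, zero_add]

theorem sortedSum_cons_eq_rankedSum_filter (f : ℕ → α → β) (s : Multiset α) (t : α) :
    sortedSum f (t ::ₘ s) = rankedSum f 0 ((s.filter (· ≤ t)).sort (· ≤ ·)) +
      (f (Multiset.card (s.filter (· ≤ t)) + 1) t +
        rankedSum f (Multiset.card (s.filter (· ≤ t)) + 1) ((s.filter (t < ·)).sort (· ≤ ·))) := by
  rw [sortedSum, Multiset.sort_cons_eq s t, rankedSum_append, rankedSum_cons,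
    Multiset.length_sort, zero_add]

theorem sortedSum_add_sortedSum_cons (f : ℕ → α → β) {s u : Multiset α} (t : α)
    (hcard : Multiset.card s = Multiset.card u) (hgt : s.filter (t < ·) = u.filter (t < ·)) :
    sortedSum f s + sortedSum f (t ::ₘ u) = sortedSum f u + sortedSum f (t ::ₘ s) := by
  have hle : Multiset.card (s.filter (· ≤ t)) = Multiset.card (u.filter (· ≤ t)) := by
    have hs := congrArg Multiset.card (Multiset.filter_le_add_filter_lt s t)
    have hu := congrArg Multiset.card (Multiset.filter_le_add_filter_lt u t)
    rw [Multiset.card_add, hgt] at hs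
    rw [Multiset.card_add] at hu
    omega
  rw [sortedSum_eq_rankedSum_filter f s t, sortedSum_eq_rankedSum_filter f u t,
    sortedSum_cons_eq_rankedSum_filter, sortedSum_cons_eq_rankedSum_filter, hgt, hle]
  abel

end SortedSum

section Ultrametric

variable {E : Type*} {d : E → E → ℝ}

theorem dist_eq_of_dist_lt (hsymm : ∀ a b : E, a ≠ b → d a b = d b a)
    (hultra : ∀ a b c : E, a ≠ b → a ≠ c → b ≠ c → d a b ≤ max (d a c) (d b c))
    {x y c : E} (hxy : x ≠ y) (hxc : x ≠ c) (hyc : y ≠ c) (h : d x y < d x c) :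
    d y c = d x c := by
  have h₁ := hultra x c y hxc hxy hyc.symm
  have h₂ := hultra y c x hyc hxy.symm hxc.symm
  rw [hsymm c y hyc.symm] at h₁
  rw [hsymm c x hxc.symm, hsymm y x hxy.symm, max_eq_right h.le] at h₂
  exact le_antisymm h₂ ((le_max_iff.mp h₁).resolve_left h.not_ge)

theorem filter_map_dist_lt_eq (hsymm : ∀ a b : E, a ≠ b → d a b = d b a)
    (hultra : ∀ a b c : E, a ≠ b → a ≠ c → b ≠ c → d a b ≤ max (d a c) (d b c))
    {C : Finset E} {x y : E} (hx : x ∉ C) (hy : y ∉ C) (hxy : x ≠ y) :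
    (C.val.map (d x)).filter (d x y < ·) = (C.val.map (d y)).filter (d x y < ·) := by
  have heq : ∀ c ∈ C, d x y < d x c ∨ d x y < d y c → d y c = d x c := by
    intro c hc h
    have hxc : x ≠ c := fun h => hx (h ▸ hc)
    have hyc : y ≠ c := fun h => hy (h ▸ hc)
    rcases h with h | h
    · exact dist_eq_of_dist_lt hsymm hultra hxy hxc hyc h
    · rw [hsymm x y hxy] at h
      exact (dist_eq_of_dist_lt hsymm hultra hxy.symm hyc hxc h).symm
  have hfilter : C.val.filter (fun c => d x y < d x c) = C.val.filter (fun c => d x y < d y c) :=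
    Multiset.filter_congr fun c hc => by
      constructor <;> intro h
      · rwa [heq c hc (Or.inl h)]
      · rwa [← heq c hc (Or.inr h)]
  rw [Multiset.filter_map, Multiset.filter_map]
  refine (congrArg _ hfilter).trans (Multiset.map_congr rfl fun c hc => ?_)
  obtain ⟨hcC, hc⟩ := Multiset.mem_filter.mp hc
  exact (heq c hcC (Or.inr hc)).symm

end Ultrametric

theorem distF_eq_sortedSum {E : Type*} [DecidableEq E] (d : E → E → ℝ) (f : ℕ → ℝ → ℝ)
    (C : Finset E) (x : E) : distF d f C x = sortedSum f (C.val.map (d x)) := by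
  rw [sortedSum, rankedSum_eq_sum_getD, ← Finset.coe_toList C, Multiset.map_coe,
    Multiset.coe_sort, List.mergeSort_eq_insertionSort]
  simp only [distF, zero_add]

theorem stmt10_general {E : Type*} [DecidableEq E] (d : E → E → ℝ)
    (hsymm : ∀ a b : E, a ≠ b → d a b = d b a)
    (hultra : ∀ a b c : E, a ≠ b → a ≠ c → b ≠ c → d a b ≤ max (d a c) (d b c))
    (f : ℕ → ℝ → ℝ)
    (C : Finset E) (x y : E) (hx : x ∉ C) (hy : y ∉ C) (hxy : x ≠ y) :
    distF d f C x + distF d f (insert x C) y =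
      distF d f C y + distF d f (insert y C) x := by
  have hinsx : (insert x C).val.map (d y) = d x y ::ₘ C.val.map (d y) := by
    rw [insert_val_of_notMem hx, Multiset.map_cons, hsymm y x hxy.symm]
  have hinsy : (insert y C).val.map (d x) = d x y ::ₘ C.val.map (d x) := by
    rw [insert_val_of_notMem hy, Multiset.map_cons]
  simp only [distF_eq_sortedSum, hinsx, hinsy]
  exact sortedSum_add_sortedSum_cons f (d x y) (by rw [Multiset.card_map, Multiset.card_map])
    (filter_map_dist_lt_eq hsymm hultra hx hy hxy)

theorem stmt10 {E : Type*} [DecidableEq E] (w : E → ℝ) (d : E → E → ℝ)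
    (hsymm : ∀ a b : E, a ≠ b → d a b = d b a)
    (hultra : ∀ a b c : E, a ≠ b → a ≠ c → b ≠ c → d a b ≤ max (d a c) (d b c))
    (f : ℕ → ℝ → ℝ) (hf : ∀ n, Monotone (f n))
    (C : Finset E) (x y : E) (hx : x ∉ C) (hy : y ∉ C) (hxy : x ≠ y) :
    distF d f C x + distF d f (insert x C) y =
      distF d f C y + distF d f (insert y C) x :=
  stmt10_general d hsymm hultra f C x y hx hy hxy
end

section
/- Let (E,w,d) be an ultra triple, r ≥ 0, and A ⊆ C ⊆ E finite with |A| = k. Let (c_1,…,c_k) be an ordering of a k-subset of C of maximum r-removed perimeter, and let (v_1,…,v_k) = proj({c_1,…,c_k} → A). If per_r({v_1,…,v_k}) = per_r({c_1,…,c_k}), then for each j < k, per_r({v_1,…,v_j}) = per_r({c_1,…,c_j}), where {c_1,…,c_j} has maximum r-removed perimeter among j-subsets of C (e.g., coming from a greedy r-removed permutation). -/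
open Finset

/-! Appending points one at a time, `perR` is the sum of the gains `w x + distR d r S x`; the
ultrametric inequality makes it independent of the order (two adjacent points can be swapped).
Along the projected sequence the `i`-th gain is at most the `i`-th greedy gain: projections only
move points closer to `v i`, and the greedy choice `c i` beats `v i ∈ C`. Since the total gains
agree, every gain agrees, hence so does every prefix sum. -/

structure IsUltra {E : Type*} (d : E → E → ℝ) : Prop where
  symm : ∀ a b : E, a ≠ b → d a b = d b a
  le_max : ∀ a b c : E, a ≠ b → a ≠ c → b ≠ c → d a b ≤ max (d a c) (d b c)

section MaxSubsetSum

variable {E : Type*}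

noncomputable def maxSubsetSum (f : E → ℝ) (q : ℕ) (U : Finset E) : ℝ :=
  sSup {s : ℝ | ∃ B ⊆ U, B.card = q ∧ s = ∑ x ∈ B, f x}

lemma maxSubsetSum_eq_sup' (f : E → ℝ) {q : ℕ} {U : Finset E} (h : q ≤ U.card) :
    maxSubsetSum f q U =
      (U.powersetCard q).sup' (powersetCard_nonempty.2 h) (fun B => ∑ x ∈ B, f x) := by
  rw [sup'_eq_csSup_image, maxSubsetSum]
  congr 1
  ext s
  simp only [Set.mem_image, mem_coe, mem_powersetCard]
  constructor
  · rintro ⟨B, hBU, hB, rfl⟩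
    exact ⟨B, ⟨hBU, hB⟩, rfl⟩
  · rintro ⟨B, ⟨hBU, hB⟩, rfl⟩
    exact ⟨B, hBU, hB, rfl⟩

lemma sum_le_maxSubsetSum {f : E → ℝ} {q : ℕ} {U B : Finset E} (hBU : B ⊆ U)
    (hB : B.card = q) :
    ∑ x ∈ B, f x ≤ maxSubsetSum f q U := by
  rw [maxSubsetSum_eq_sup' f (hB ▸ card_le_card hBU)]
  exact le_sup' (fun B => ∑ x ∈ B, f x) (mem_powersetCard.2 ⟨hBU, hB⟩)

lemma maxSubsetSum_le {f : E → ℝ} {q : ℕ} {U : Finset E} (h : q ≤ U.card) {X : ℝ}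
    (hX : ∀ B ⊆ U, B.card = q → ∑ x ∈ B, f x ≤ X) : maxSubsetSum f q U ≤ X := by
  rw [maxSubsetSum_eq_sup' f h]
  exact sup'_le _ _ fun B hB => hX B (mem_powersetCard.1 hB).1 (mem_powersetCard.1 hB).2

lemma exists_sum_eq_maxSubsetSum (f : E → ℝ) {q : ℕ} {U : Finset E} (h : q ≤ U.card) :
    ∃ B ⊆ U, B.card = q ∧ ∑ x ∈ B, f x = maxSubsetSum f q U := by
  rw [maxSubsetSum_eq_sup' f h]
  obtain ⟨B, hB, hmax⟩ :=
    exists_mem_eq_sup' (powersetCard_nonempty.2 h) (fun B => ∑ x ∈ B, f x)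
  exact ⟨B, (mem_powersetCard.1 hB).1, (mem_powersetCard.1 hB).2, hmax.symm⟩

@[simp]
lemma maxSubsetSum_zero (f : E → ℝ) (U : Finset E) : maxSubsetSum f 0 U = 0 := by
  simp [maxSubsetSum_eq_sup' f (Nat.zero_le _)]

lemma maxSubsetSum_image_le {ι : Type*} [DecidableEq E] {I : Finset ι} {f g : ι → E}
    (hf : Set.InjOn f I) (hg : Set.InjOn g I) {h : E → ℝ} (hfg : ∀ t ∈ I, h (f t) ≤ h (g t))
    {q : ℕ} (hq : q ≤ I.card) :
    maxSubsetSum h q (I.image f) ≤ maxSubsetSum h q (I.image g) := by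
  refine maxSubsetSum_le (by rwa [card_image_of_injOn hf]) fun B hB hBq => ?_
  obtain ⟨T, hTI, rfl⟩ := subset_image_iff.1 hB
  have hfT := hf.mono (coe_subset.2 hTI)
  have hgT := hg.mono (coe_subset.2 hTI)
  calc ∑ x ∈ T.image f, h x = ∑ t ∈ T, h (f t) := sum_image hfT
    _ ≤ ∑ t ∈ T, h (g t) := sum_le_sum fun t ht => hfg t (hTI ht)
    _ = ∑ x ∈ T.image g, h x := (sum_image hgT).symm
    _ ≤ maxSubsetSum h q (I.image g) :=
      sum_le_maxSubsetSum (image_subset_image hTI)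
        (by rwa [card_image_of_injOn hgT, ← card_image_of_injOn hfT])

variable [DecidableEq E]

lemma add_sum_le_maxSubsetSum {f : E → ℝ} {q : ℕ} {S U : Finset E} {y : E} (hy : y ∈ U)
    (hyS : y ∉ S) (hSU : S ⊆ U) (hS : S.card = q) :
    f y + ∑ x ∈ S, f x ≤ maxSubsetSum f (q + 1) U := by
  rw [← sum_insert hyS]
  exact sum_le_maxSubsetSum (insert_subset hy hSU) (by rw [card_insert_of_notMem hyS, hS])

lemma exists_mem_notMem_erase_subset {S T L : Finset E} {b : E} (hSL : S ⊆ L)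
    (hTL : T ⊆ insert b L) (hcard : S.card < T.card) :
    ∃ x ∈ T, x ∉ S ∧ T.erase x ⊆ L := by
  by_cases hb : b ∈ T ∧ b ∉ L
  · exact ⟨b, hb.1, fun h => hb.2 (hSL h), subset_insert_iff.1 hTL⟩
  · have hTL' : T ⊆ L := fun x hx => by
      rcases mem_insert.1 (hTL hx) with rfl | h
      · tauto
      · exact h
    obtain ⟨x, hxT, hxS⟩ := exists_mem_notMem_of_card_lt_card hcard
    exact ⟨x, hxT, hxS, (erase_subset _ _).trans hTL'⟩

lemma maxSubsetSum_swap_le {d : E → E → ℝ} (hd : IsUltra d) {a b : E} {L : Finset E}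
    (hab : a ≠ b) (ha : a ∉ L) (hb : b ∉ L) {q : ℕ} (hq : q ≤ L.card) :
    maxSubsetSum (d b) q L + maxSubsetSum (d a) (q + 1) (insert b L) ≤
      maxSubsetSum (d a) q L + maxSubsetSum (d b) (q + 1) (insert a L) := by
  obtain ⟨S, hSL, hScard, hS⟩ := exists_sum_eq_maxSubsetSum (d b) hq
  obtain ⟨T, hTL, hTcard, hT⟩ := exists_sum_eq_maxSubsetSum (d a) (q := q + 1)
    (U := insert b L) (by rw [card_insert_of_notMem hb]; omega)
  obtain ⟨x, hxT, hxS, hTx⟩ := exists_mem_notMem_erase_subset hSL hTL (by omega)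
  have hT_le : ∑ y ∈ T, d a y ≤ d a x + maxSubsetSum (d a) q L := by
    rw [← add_sum_erase T _ hxT]
    gcongr
    exact sum_le_maxSubsetSum hTx (by rw [card_erase_of_mem hxT]; omega)
  have hSaL : S ⊆ insert a L := hSL.trans (subset_insert a L)
  have via_a := add_sum_le_maxSubsetSum (f := d b) (mem_insert_self a L)
    (fun h => ha (hSL h)) hSaL hScard
  -- `x = b`, or `x ∈ L` and the ultrametric inequality bounds `d a x` by `d b a` or `d b x`.
  have hx_le : d a x + ∑ y ∈ S, d b y ≤ maxSubsetSum (d b) (q + 1) (insert a L) := by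
    rcases mem_insert.1 (hTL hxT) with rfl | hxL
    · rwa [hd.symm _ _ hab]
    have hxa : x ≠ a := ne_of_mem_of_not_mem hxL ha
    have hxb : x ≠ b := ne_of_mem_of_not_mem hxL hb
    have via_x := add_sum_le_maxSubsetSum (f := d b) (mem_insert_of_mem hxL) hxS hSaL hScard
    rcases le_max_iff.1 (hd.le_max a x b hxa.symm hab hxb) with h | h
    · rw [hd.symm a b hab] at h
      linarith
    · rw [hd.symm x b hxb] at h
      linarith
  linarith

end MaxSubsetSum

section Perimeter

variable {E : Type*} [DecidableEq E] {w : E → ℝ} {d : E → E → ℝ} {r : ℕ}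

lemma distR_eq_maxSubsetSum (d : E → E → ℝ) (r : ℕ) (U : Finset E) (v : E) :
    distR d r U v = maxSubsetSum (d v) (U.card - r) U := by
  unfold distR
  split_ifs with h
  · rw [Nat.sub_eq_zero_of_le h, maxSubsetSum_zero]
  · rfl

lemma distR_image_le {ι : Type*} {I : Finset ι} {f g : ι → E} (hf : Set.InjOn f I)
    (hg : Set.InjOn g I) {y : E} (hfg : ∀ t ∈ I, d y (f t) ≤ d y (g t)) :
    distR d r (I.image f) y ≤ distR d r (I.image g) y := by
  rw [distR_eq_maxSubsetSum, distR_eq_maxSubsetSum, card_image_of_injOn hf,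
    card_image_of_injOn hg]
  exact maxSubsetSum_image_le hf hg hfg (Nat.sub_le _ _)

lemma distR_swap (hd : IsUltra d) {a b : E} {L : Finset E} (hab : a ≠ b) (ha : a ∉ L)
    (hb : b ∉ L) :
    distR d r L b + distR d r (insert b L) a = distR d r L a + distR d r (insert a L) b := by
  simp only [distR_eq_maxSubsetSum, card_insert_of_notMem ha, card_insert_of_notMem hb]
  rcases le_or_gt r L.card with h | h
  · rw [show L.card + 1 - r = L.card - r + 1 by omega]
    linarith [maxSubsetSum_swap_le hd hab ha hb (Nat.sub_le L.card r),
      maxSubsetSum_swap_le hd hab.symm hb ha (Nat.sub_le L.card r)]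
  · simp [Nat.sub_eq_zero_of_le h.le, Nat.sub_eq_zero_of_le (show L.card + 1 ≤ r by omega)]

lemma perList_perm (hd : IsUltra d) {l₁ l₂ : List E} (h : l₁.Perm l₂) (hl₁ : l₁.Nodup) :
    perList w d r l₁ = perList w d r l₂ := by
  induction h with
  | nil => rfl
  | cons x h ih =>
    simp only [perList]
    rw [ih (List.nodup_cons.1 hl₁).2, List.toFinset_eq_of_perm _ _ h]
  | swap x y l =>
    simp only [List.nodup_cons, List.mem_cons, not_or] at hl₁
    obtain ⟨⟨hyx, hyl⟩, hxl, -⟩ := hl₁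
    simp only [perList, List.toFinset_cons]
    linarith [distR_swap (r := r) hd hyx (List.mem_toFinset.not.2 hyl)
      (List.mem_toFinset.not.2 hxl)]
  | trans h₁ _ ih₁ ih₂ => rw [ih₁ hl₁, ih₂ (h₁.nodup_iff.1 hl₁)]

lemma perR_insert (hd : IsUltra d) {x : E} {S : Finset E} (hx : x ∉ S) :
    perR w d r (insert x S) = perR w d r S + w x + distR d r S x := by
  rw [perR, perList_perm hd (toList_insert hx) (nodup_toList _)]
  simp only [perList, toList_toFinset]
  rfl

noncomputable def prefixGain (w : E → ℝ) (d : E → E → ℝ) (r : ℕ) (f : ℕ → E)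
    (i : ℕ) : ℝ :=
  w (f i) + distR d r ((range i).image f) (f i)

lemma notMem_image_range_of_injOn {α : Type*} [DecidableEq α] {f : ℕ → α} {n i : ℕ}
    (hf : Set.InjOn f (range n)) (hi : i < n) : f i ∉ (range i).image f := by
  simp only [mem_image, mem_range, not_exists, not_and]
  intro j hj hji
  have := hf (by simp; omega) (by simp; omega) hji
  omega

lemma injOn_range_of_forall_notMem {α : Type*} [DecidableEq α] {f : ℕ → α} {n : ℕ}
    (h : ∀ i < n, f i ∉ (range i).image f) : Set.InjOn f (range n) := by
  intro i hi j hj hij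
  simp only [coe_range, Set.mem_Iio] at hi hj
  rcases lt_trichotomy i j with hlt | rfl | hlt
  · exact absurd (mem_image_of_mem f (mem_range.2 hlt)) (hij ▸ h j hj)
  · rfl
  · exact absurd (mem_image_of_mem f (mem_range.2 hlt)) (hij.symm ▸ h i hi)

lemma perR_image_range (hd : IsUltra d) {f : ℕ → E} {n : ℕ} (hf : Set.InjOn f (range n)) :
    perR w d r ((range n).image f) = ∑ i ∈ range n, prefixGain w d r f i := by
  induction n with
  | zero => simp [perR, perList]
  | succ n ih =>
    rw [sum_range_succ, range_add_one, image_insert,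
      perR_insert hd (notMem_image_range_of_injOn hf n.lt_succ_self),
      ih (hf.mono (coe_subset.2 (range_subset_range.2 n.le_succ))), add_assoc]
    rfl

end Perimeter

lemma Finset.sum_range_eq_of_le_of_sum_eq {M : Type*} [AddCommMonoid M] [PartialOrder M]
    [IsOrderedCancelAddMonoid M] {f g : ℕ → M} {k j : ℕ} (hle : ∀ i < k, f i ≤ g i)
    (hsum : ∑ i ∈ range k, f i = ∑ i ∈ range k, g i) (hj : j ≤ k) :
    ∑ i ∈ range j, f i = ∑ i ∈ range j, g i := by
  have heq := (sum_eq_sum_iff_of_le fun i hi => hle i (mem_range.1 hi)).1 hsum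
  exact sum_congr rfl fun i hi => heq i (mem_range.2 ((mem_range.1 hi).trans_le hj))

namespace IsProj

variable {E : Type*} [DecidableEq E] {d : E → E → ℝ} {S : Finset E} {c b : E}

lemma mem_s18 (h : IsProj d S c b) : b ∈ S := by
  rcases h with ⟨hc, rfl⟩ | ⟨-, hb, -⟩
  exacts [hc, hb]

lemma eq_of_mem (h : IsProj d S c b) (hc : c ∈ S) : b = c := by
  rcases h with ⟨-, rfl⟩ | ⟨hc', -⟩
  exacts [rfl, absurd hc hc']

lemma dist_le_s18 (hd : IsUltra d) (h : IsProj d S c b) {y : E} (hy : y ∈ S) (hyb : y ≠ b) :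
    d y b ≤ d y c := by
  rcases h with ⟨-, rfl⟩ | ⟨hc, hb, hmin⟩
  · rfl
  have hyc : y ≠ c := ne_of_mem_of_not_mem hy hc
  have hbc : b ≠ c := ne_of_mem_of_not_mem hb hc
  have hbc_le : d b c ≤ d y c := by
    rw [hd.symm b c hbc, hd.symm y c hyc]
    exact hmin y hy
  exact (hd.le_max y b c hyb hyc hbc).trans (max_le le_rfl hbc_le)

end IsProj

namespace IsSeqProj

variable {E : Type*} [DecidableEq E] {d : E → E → ℝ} {A : Finset E} {k i : ℕ} {c v : ℕ → E}

lemma mem_sdiff (hv : IsSeqProj d A k c v) (hi : i < k) : v i ∈ A \ (range i).image v :=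
  (hv i hi).mem_s18

lemma injOn_s18 (hv : IsSeqProj d A k c v) : Set.InjOn v (range k) :=
  injOn_range_of_forall_notMem fun _ hi => (Finset.mem_sdiff.1 (hv.mem_sdiff hi)).2

lemma mem_sdiff_of_le (hv : IsSeqProj d A k c v) (hi : i < k) {t : ℕ} (ht : t ≤ i) :
    v i ∈ A \ (range t).image v :=
  sdiff_subset_sdiff le_rfl (image_subset_image (range_subset_range.2 ht)) (hv.mem_sdiff hi)

lemma notMem_image_range (hv : IsSeqProj d A k c v) (hi : i < k) :
    v i ∉ (range i).image c := by
  intro h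
  obtain ⟨s, hs, hcs⟩ := mem_image.1 h
  have hs : s < i := mem_range.1 hs
  have hcs_mem : c s ∈ A \ (range s).image v := hcs ▸ hv.mem_sdiff_of_le hi hs.le
  have hvs : v s = v i := ((hv s (by omega)).eq_of_mem hcs_mem).trans hcs
  exact (Finset.mem_sdiff.1 (hv.mem_sdiff hi)).2 (hvs ▸ mem_image_of_mem v (mem_range.2 hs))

lemma dist_le_s18 (hd : IsUltra d) (hv : IsSeqProj d A k c v) (hi : i < k) {t : ℕ} (ht : t < i) :
    d (v i) (v t) ≤ d (v i) (c t) :=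
  (hv t (by omega)).dist_le_s18 hd (hv.mem_sdiff_of_le hi ht.le)
    fun h => by have := hv.injOn_s18 (by simp; omega) (by simp; omega) h; omega

end IsSeqProj

namespace IsGreedy

variable {E : Type*} [DecidableEq E] {w : E → ℝ} {d : E → E → ℝ} {r m : ℕ} {C : Finset E}
  {c : ℕ → E}

lemma injOn_s18 (hc : IsGreedy w d r C m c) : Set.InjOn c (range m) :=
  fun i hi j hj h => hc.2.1 i (by simpa using hi) j (by simpa using hj) h

lemma add_distR_le_prefixGain (hd : IsUltra d) (hc : IsGreedy w d r C m c) {i : ℕ} (hi : i < m)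
    {x : E} (hx : x ∈ C) (hxc : x ∉ (range i).image c) :
    w x + distR d r ((range i).image c) x ≤ prefixGain w d r c i := by
  have h := hc.2.2 i hi x hx hxc
  rw [perR_insert hd hxc, perR_insert hd (notMem_image_range_of_injOn hc.injOn_s18 hi),
    add_assoc, add_assoc, add_le_add_iff_left] at h
  exact h

end IsGreedy

lemma IsSeqProj.prefixGain_le {E : Type*} [DecidableEq E] {w : E → ℝ} {d : E → E → ℝ}
    {r m k : ℕ} {C A : Finset E} {c v : ℕ → E} (hd : IsUltra d) (hc : IsGreedy w d r C m c)
    (hk : k ≤ m) (hAC : A ⊆ C) (hv : IsSeqProj d A k c v) {i : ℕ} (hi : i < k) :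
    prefixGain w d r v i ≤ prefixGain w d r c i :=
  calc prefixGain w d r v i ≤ w (v i) + distR d r ((range i).image c) (v i) := by
        unfold prefixGain
        gcongr
        exact distR_image_le (hv.injOn_s18.mono (coe_subset.2 (range_subset_range.2 hi.le)))
          (hc.injOn_s18.mono (coe_subset.2 (range_subset_range.2 (by omega))))
          fun t ht => hv.dist_le_s18 hd hi (mem_range.1 ht)
    _ ≤ prefixGain w d r c i :=
        hc.add_distR_le_prefixGain hd (by omega) (hAC (Finset.mem_sdiff.1 (hv.mem_sdiff hi)).1)
          (hv.notMem_image_range hi)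

theorem stmt18_general {E : Type*} [DecidableEq E] (w : E → ℝ) (d : E → E → ℝ)
    (hsymm : ∀ a b : E, a ≠ b → d a b = d b a)
    (hultra : ∀ a b c : E, a ≠ b → a ≠ c → b ≠ c → d a b ≤ max (d a c) (d b c))
    (r m k : ℕ) (C : Finset E) (c : ℕ → E) (hc : IsGreedy w d r C m c) (hk : k ≤ m)
    (A : Finset E) (hAC : A ⊆ C)
    (v : ℕ → E) (hv : IsSeqProj d A k c v)
    (heq : perR w d r ((Finset.range k).image v) = perR w d r ((Finset.range k).image c)) :
    ∀ j < k,
      perR w d r ((Finset.range j).image v) = perR w d r ((Finset.range j).image c) := by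
  have hd : IsUltra d := ⟨hsymm, hultra⟩
  have hcinj : Set.InjOn c (range k) := hc.injOn_s18.mono (coe_subset.2 (range_subset_range.2 hk))
  have hsum :
      ∑ i ∈ range k, prefixGain w d r v i = ∑ i ∈ range k, prefixGain w d r c i := by
    rwa [← perR_image_range hd hv.injOn_s18, ← perR_image_range hd hcinj]
  intro j hj
  have hjk : range j ⊆ range k := range_subset_range.2 hj.le
  rw [perR_image_range hd (hv.injOn_s18.mono (coe_subset.2 hjk)),
    perR_image_range hd (hcinj.mono (coe_subset.2 hjk))]
  exact sum_range_eq_of_le_of_sum_eq (fun i hi => hv.prefixGain_le hd hc hk hAC hi) hsum hj.le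

theorem stmt18 {E : Type*} [DecidableEq E] (w : E → ℝ) (d : E → E → ℝ)
    (hsymm : ∀ a b : E, a ≠ b → d a b = d b a)
    (hultra : ∀ a b c : E, a ≠ b → a ≠ c → b ≠ c → d a b ≤ max (d a c) (d b c))
    (r m k : ℕ) (C : Finset E) (c : ℕ → E) (hc : IsGreedy w d r C m c) (hk : k ≤ m)
    (A : Finset E) (hAC : A ⊆ C) (hAcard : A.card = k)
    (v : ℕ → E) (hv : IsSeqProj d A k c v)
    (heq : perR w d r ((Finset.range k).image v) = perR w d r ((Finset.range k).image c)) :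
    ∀ j < k,
      perR w d r ((Finset.range j).image v) = perR w d r ((Finset.range j).image c) :=
  stmt18_general w d hsymm hultra r m k C c hc hk A hAC v hv heq
end
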